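/- Let (a_n) be a real sequence that is bounded from below or bounded from above, let p : ℕ → ℕ be a bijection, and let c_n = (a_{p(1)} + ⋯ + a_{p(n)})/n be the arithmetic means of the rearranged sequence. Then the set of accumulation points (cluster points) of (c_n) in ℝ̄ is exactly the extended-real closed interval [liminf_{n→∞} c_n, limsup_{n→∞} c_n]. -/

import Mathlib

open Filter Topology

/-- Arithmetic mean of the first `n` terms of a real sequence. -/
noncomputable def avgSeq (a : ℕ → ℝ) (n : ℕ) : ℝ := (∑ i ∈ Finset.range n, a i) / n

/-- `a` tends to `α ∈ ℝ̄` in average: the sequence of arithmetic means tends to `α`. -/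
def avgTendsTo (a : ℕ → ℝ) (α : EReal) : Prop :=
  Tendsto (fun n => ((avgSeq a n : ℝ) : EReal)) atTop (𝓝 α)

/-- The set of points of `ℝ̄` accessible in average by rearrangement of `a`. -/
def AAR (a : ℕ → ℝ) : Set EReal :=
  {α | ∃ p : ℕ → ℕ, Function.Bijective p ∧ avgTendsTo (fun n => a (p n)) α}

/-- The interleaving `(b_n)||(c_n)` (0-indexed: `a (2n) = b n`, `a (2n+1) = c n`). -/
noncomputable def interleave (b c : ℕ → ℝ) : ℕ → ℝ :=
  fun n => if n % 2 = 0 then b (n / 2) else c (n / 2)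

/-!
The endpoints `liminf` and `limsup` are always cluster points, and every cluster point lies
between them. For a real `x` strictly between, the means `cₙ` cross `x` downward infinitely
often. If the terms are bounded below by `m`, then `(n + 1) cₙ₊₁ = n cₙ + aₙ` shows that
`cₙ ≥ x` forces `cₙ₊₁ ≥ x - (x - m) / (n + 1)`, so the means just after the downward crossings
converge to `x`. The case of a sequence bounded above follows by negation.
-/

theorem mapClusterPt_iff_exists_strictMono_tendsto {X : Type*} [TopologicalSpace X]
    [FirstCountableTopology X] {u : ℕ → X} {x : X} :
    MapClusterPt x atTop u ↔ ∃ φ : ℕ → ℕ, StrictMono φ ∧ Tendsto (u ∘ φ) atTop (𝓝 x) :=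
  ⟨MapClusterPt.tendsto_subseq, fun ⟨_, hφ, h⟩ => h.mapClusterPt.of_comp hφ.tendsto_atTop⟩

theorem frequently_and_not_succ {P : ℕ → Prop} (hP : ∃ᶠ n in atTop, P n)
    (hnP : ∃ᶠ n in atTop, ¬ P n) : ∃ᶠ n in atTop, P n ∧ ¬ P (n + 1) := by
  rw [frequently_atTop] at *
  intro N
  obtain ⟨n₀, hn₀N, hn₀⟩ := hP N
  by_contra! h
  have hall : ∀ n ≥ n₀, P n := fun n hn =>
    Nat.le_induction hn₀ (fun k hk ih => h k (hn₀N.trans hk) ih) n hn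
  obtain ⟨n, hn, hnot⟩ := hnP n₀
  exact hnot (hall n hn)

theorem mapClusterPt_of_frequently_crossing {c δ : ℕ → ℝ} {x : ℝ}
    (hδ : Tendsto δ atTop (𝓝 0)) (hstep : ∀ n, x ≤ c n → x - δ n ≤ c (n + 1))
    (hge : ∃ᶠ n in atTop, x ≤ c n) (hlt : ∃ᶠ n in atTop, c n < x) :
    MapClusterPt x atTop c := by
  rw [Metric.nhds_basis_ball.mapClusterPt_iff_frequently]
  intro ε hε
  have hcross := frequently_and_not_succ hge (hlt.mono fun _ => not_le.2)
  have hsmall : ∀ᶠ n in atTop, δ n < ε := hδ.eventually (eventually_lt_nhds hε)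
  refine (tendsto_add_atTop_nat 1).frequently ((hcross.and_eventually hsmall).mono ?_)
  rintro n ⟨⟨hn, hn1⟩, hδn⟩
  have := hstep n hn
  rw [not_le] at hn1
  rw [Metric.mem_ball, Real.dist_eq, abs_sub_lt_iff]
  constructor <;> linarith

theorem avgSeq_succ (b : ℕ → ℝ) (n : ℕ) :
    avgSeq b (n + 1) = (n * avgSeq b n + b n) / (n + 1) := by
  rcases Nat.eq_zero_or_pos n with rfl | hn
  · simp [avgSeq]
  · have : (n : ℝ) ≠ 0 := by positivity
    simp only [avgSeq, Finset.sum_range_succ, Nat.cast_succ]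
    field_simp

theorem avgSeq_neg (b : ℕ → ℝ) : avgSeq (-b) = -avgSeq b := by
  funext n
  simp [avgSeq, neg_div]

theorem sub_div_le_avgSeq_succ {b : ℕ → ℝ} {m x : ℝ} {n : ℕ} (hm : m ≤ b n)
    (hx : x ≤ avgSeq b n) : x - (x - m) / (n + 1) ≤ avgSeq b (n + 1) := by
  have hn : (0 : ℝ) < n + 1 := by positivity
  have key : (x - (x - m) / (n + 1)) * (n + 1) = n * x + m := by
    field_simp
    ring
  rw [avgSeq_succ, le_div_iff₀ hn, key]
  nlinarith [mul_le_mul_of_nonneg_left hx (Nat.cast_nonneg (α := ℝ) n)]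

theorem mapClusterPt_avgSeq_of_bddBelow {b : ℕ → ℝ} {x : ℝ} (hb : BddBelow (Set.range b))
    (hlt : ∃ᶠ n in atTop, avgSeq b n < x) (hgt : ∃ᶠ n in atTop, x < avgSeq b n) :
    MapClusterPt x atTop (avgSeq b) := by
  obtain ⟨m, hm⟩ := hb
  refine mapClusterPt_of_frequently_crossing (δ := fun n => (x - m) / (n + 1)) ?_
    (fun n hn => sub_div_le_avgSeq_succ (hm ⟨n, rfl⟩) hn) (hgt.mono fun _ => le_of_lt) hlt
  simpa [Function.comp_def] using (tendsto_const_div_atTop_nhds_zero_nat (x - m)).comp (tendsto_add_atTop_nat 1)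

theorem mapClusterPt_avgSeq {b : ℕ → ℝ} {x : ℝ}
    (hbd : BddBelow (Set.range b) ∨ BddAbove (Set.range b))
    (hlt : ∃ᶠ n in atTop, avgSeq b n < x) (hgt : ∃ᶠ n in atTop, x < avgSeq b n) :
    MapClusterPt x atTop (avgSeq b) := by
  rcases hbd with hb | ⟨M, hM⟩
  · exact mapClusterPt_avgSeq_of_bddBelow hb hlt hgt
  · have hneg : MapClusterPt (-x) atTop (avgSeq (-b)) := by
      refine mapClusterPt_avgSeq_of_bddBelow ⟨-M, ?_⟩ ?_ ?_
      · rintro _ ⟨n, rfl⟩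
        exact neg_le_neg (hM ⟨n, rfl⟩)
      · simpa [avgSeq_neg] using hgt
      · simpa [avgSeq_neg] using hlt
    simpa [avgSeq_neg, Function.comp_def] using hneg.tendsto_comp (continuous_neg.tendsto (-x))

theorem mapClusterPt_coe_avgSeq_iff {b : ℕ → ℝ}
    (hbd : BddBelow (Set.range b) ∨ BddAbove (Set.range b)) {α : EReal} :
    MapClusterPt α atTop (fun n => (avgSeq b n : EReal)) ↔
      α ∈ Set.Icc (liminf (fun n => (avgSeq b n : EReal)) atTop)
        (limsup (fun n => (avgSeq b n : EReal)) atTop) := by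
  refine ⟨fun h => ⟨h.liminf_le, h.le_limsup⟩, fun ⟨hL, hU⟩ => ?_⟩
  rcases hL.eq_or_lt with rfl | hL
  · exact MapClusterPt.liminf
  rcases hU.eq_or_lt with rfl | hU
  · exact MapClusterPt.limsup
  obtain ⟨x, rfl⟩ : ∃ x : ℝ, α = x := ⟨α.toReal, (EReal.coe_toReal hU.ne_top hL.ne_bot).symm⟩
  have hlt : ∃ᶠ n in atTop, avgSeq b n < x :=
    (frequently_lt_of_liminf_lt (by isBoundedDefault) hL).mono fun _ => EReal.coe_lt_coe_iff.1
  have hgt : ∃ᶠ n in atTop, x < avgSeq b n :=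
    (frequently_lt_of_lt_limsup (by isBoundedDefault) hU).mono fun _ => EReal.coe_lt_coe_iff.1
  exact (mapClusterPt_avgSeq hbd hlt hgt).tendsto_comp (f := Real.toEReal)
    (continuous_coe_real_ereal.tendsto x)

theorem stmt19_general (a : ℕ → ℝ)
    (hbd : BddBelow (Set.range a) ∨ BddAbove (Set.range a))
    (p : ℕ → ℕ) :
    {α : EReal | ∃ φ : ℕ → ℕ, StrictMono φ ∧
        Tendsto (fun k => ((avgSeq (fun n => a (p n)) (φ k) : ℝ) : EReal))
          atTop (𝓝 α)} =
      Set.Icc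
        (liminf (fun n => ((avgSeq (fun n => a (p n)) n : ℝ) : EReal)) atTop)
        (limsup (fun n => ((avgSeq (fun n => a (p n)) n : ℝ) : EReal)) atTop) := by
  have hrange := Set.range_comp_subset_range p a
  have hbd' : BddBelow (Set.range (fun n => a (p n))) ∨ BddAbove (Set.range (fun n => a (p n))) :=
    hbd.imp (·.mono hrange) (·.mono hrange)
  ext α
  exact mapClusterPt_iff_exists_strictMono_tendsto.symm.trans (mapClusterPt_coe_avgSeq_iff hbd')

/-- For a real sequence bounded from below or above and any rearrangement of it,
the set of accumulation points in `ℝ̄` of the sequence of arithmetic means of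
the rearrangement is exactly `[liminf cₙ, limsup cₙ]`. -/
theorem stmt19 (a : ℕ → ℝ)
    (hbd : BddBelow (Set.range a) ∨ BddAbove (Set.range a))
    (p : ℕ → ℕ) (hp : Function.Bijective p) :
    {α : EReal | ∃ φ : ℕ → ℕ, StrictMono φ ∧
        Tendsto (fun k => ((avgSeq (fun n => a (p n)) (φ k) : ℝ) : EReal))
          atTop (𝓝 α)} =
      Set.Icc
        (liminf (fun n => ((avgSeq (fun n => a (p n)) n : ℝ) : EReal)) atTop)
        (limsup (fun n => ((avgSeq (fun n => a (p n)) n : ℝ) : EReal)) atTop) :=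
  stmt19_general a hbd p
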